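/- arXiv:1903.09905 — 2 statements merged into one kernel-verified Lean document; each statement's English description precedes it below -/
import Mathlib

section
/- For any nonempty finite words p, s over a finite alphabet, there is a morphism h on an extended alphabet and a coding τ such that τ(h^n(w)) = p s^{n+1} for all n ≥ 0, where w is a suitable word, and |h^n(w)| = |p| + (n+1)|s| ∈ Θ(n). (Depth-2 zigzag terms of form S,F are realizable by morphisms with linear growth on the block.) -/
private lemma flatMap_fixed {B : Type} (g : B → List B) (l : List B)
    (h : ∀ x ∈ l, g x = [x]) : l.flatMap g = l := by
  induction l with
  | nil => simp
  | cons a t ih =>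
    simp only [List.flatMap_cons, h a (by simp)]
    rw [ih (fun x hx => h x (by simp [hx]))]
    simp

/-- For any nonempty finite words `p, s` over a finite alphabet `A`,
there are a finite alphabet `B`, a nonempty word `w` over `B`, a morphism `h` on `B`,
and a coding `τ : B → A` such that `τ(h^n(w)) = p s^{n+1}` for all `n ≥ 0`, and
`|h^n(w)| = |p| + (n+1)·|s| ∈ Θ(n)`. -/
theorem stmt17 {A : Type*} [Fintype A] (p s : List A) (hp : p ≠ []) (hs : s ≠ []) :
    ∃ (B : Type) (_ : Fintype B) (w : List B) (h : List B → List B) (τ : B → A),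
      (∀ u v : List B, h (u ++ v) = h u ++ h v) ∧
      w ≠ [] ∧
      (∀ n : ℕ, (h^[n] w).map τ = p ++ (List.replicate (n + 1) s).flatten) ∧
      (∀ n : ℕ, (h^[n] w).length = p.length + (n + 1) * s.length) := by
  classical
  set B : Type := Fin p.length ⊕ Fin s.length ⊕ Unit with hB
  -- the special letter
  set a : B := Sum.inr (Sum.inr ()) with ha
  -- copy of s
  set scopy : List B := (List.finRange s.length).map (fun j => Sum.inr (Sum.inl j))
    with hscopy
  set w : List B :=
    (List.finRange p.length).map Sum.inl ++ scopy.dropLast ++ [a] with hw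
  set g : B → List B := fun x => if x = a then a :: scopy else [x] with hg
  set h : List B → List B := fun l => l.flatMap g with hh
  set τ : B → A := fun x =>
    Sum.elim p.get (Sum.elim s.get (fun _ => s.getLast hs)) x with hτ
  have hga : g a = a :: scopy := by simp [hg]
  have hfix : ∀ x ∈ scopy, g x = [x] := by
    intro x hx
    simp only [hscopy, List.mem_map] at hx
    obtain ⟨j, _, rfl⟩ := hx
    simp only [hg]
    rw [if_neg]
    intro hcon
    rw [ha] at hcon
    exact Sum.inl_ne_inr (Sum.inr_injective hcon)
  have hscopy_fix : h scopy = scopy := flatMap_fixed g scopy hfix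
  have hτscopy : scopy.map τ = s := by
    rw [hscopy, List.map_map]
    exact List.map_get_finRange s
  have hhw : h w = w ++ scopy := by
    simp only [hh, hw, List.flatMap_append]
    have h1 : ((List.finRange p.length).map Sum.inl).flatMap g =
        (List.finRange p.length).map Sum.inl := by
      apply flatMap_fixed
      intro x hx
      simp only [List.mem_map] at hx
      obtain ⟨j, _, rfl⟩ := hx
      simp [hg, ha]
    have h2 : (scopy.dropLast).flatMap g = scopy.dropLast := by
      apply flatMap_fixed
      intro x hx
      exact hfix x (List.dropLast_sublist scopy |>.mem hx)
    rw [h1, h2]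
    simp [hga]
  have hrep : ∀ n : ℕ, h^[n] w = w ++ (List.replicate n scopy).flatten := by
    intro n
    induction n with
    | zero => simp
    | succ n ih =>
      rw [Function.iterate_succ_apply', ih]
      have hflat : h ((List.replicate n scopy).flatten) =
          (List.replicate n scopy).flatten := by
        apply flatMap_fixed
        intro x hx
        apply hfix
        simp only [List.mem_flatten] at hx
        obtain ⟨l, hl, hxl⟩ := hx
        rw [List.eq_of_mem_replicate hl] at hxl
        exact hxl
      show (w ++ (List.replicate n scopy).flatten).flatMap g = _
      rw [List.flatMap_append]
      show h w ++ h _ = _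
      rw [hhw, hflat]
      have : List.replicate (n + 1) scopy = scopy :: List.replicate n scopy := rfl
      rw [this, List.flatten_cons, List.append_assoc]
  have hτw : w.map τ = p ++ s := by
    have h1 : ((List.finRange p.length).map Sum.inl).map τ = p := by
      rw [List.map_map]
      have : τ ∘ Sum.inl = p.get := by funext j; simp [hτ]
      rw [this]; exact List.map_get_finRange p
    have h2 : (scopy.dropLast ++ [a]).map τ = s := by
      rw [List.map_append, List.map_dropLast, hτscopy]
      have : [a].map τ = [s.getLast hs] := by simp [hτ, ha]
      rw [this]
      exact List.dropLast_append_getLast hs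
    rw [hw, List.append_assoc, List.map_append, h1, h2]
  have hmapτ : ∀ n : ℕ,
      (h^[n] w).map τ = p ++ (List.replicate (n + 1) s).flatten := by
    intro n
    rw [hrep n, List.map_append, hτw]
    have hfl : ((List.replicate n scopy).flatten).map τ =
        (List.replicate n s).flatten := by
      rw [List.map_flatten, List.map_replicate, hτscopy]
    rw [hfl]
    have : List.replicate (n + 1) s = s :: List.replicate n s := rfl
    rw [this, List.flatten_cons, List.append_assoc]
  refine ⟨B, by infer_instance, w, h, τ, ?_, ?_, hmapτ, ?_⟩
  · intro u v
    simp [hh, List.flatMap_append]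
  · simp [hw]
  · intro n
    have := congrArg List.length (hmapτ n)
    simpa [Nat.mul_comm] using this
end

section
/- Suppose h is a morphism, c a letter with h(c) = s·c·t, and suppose the set {h^n(c) : n ≥ 0} is finite. Then both s and t are mortal under h. -/
/-- If `h` is a morphism, `c` a letter with `h(c) = s·c·t`, and the set
`{h^n(c) : n ≥ 0}` is finite, then both `s` and `t` are mortal under `h`. -/
theorem stmt19 {A : Type*} [Fintype A] (h : List A → List A)
    (hhom : ∀ u v : List A, h (u ++ v) = h u ++ h v)
    (c : A) (s t : List A) (hc : h [c] = s ++ [c] ++ t)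
    (hfin : Set.Finite {w : List A | ∃ n : ℕ, h^[n] [c] = w}) :
    (∃ m : ℕ, h^[m] s = []) ∧ (∃ m : ℕ, h^[m] t = []) := by
  -- iterate is a morphism
  have hiter : ∀ n (u v : List A), h^[n] (u ++ v) = h^[n] u ++ h^[n] v := by
    intro n
    induction n with
    | zero => intro u v; simp
    | succ k ih =>
      intro u v
      rw [Function.iterate_succ_apply, hhom, ih, Function.iterate_succ_apply, Function.iterate_succ_apply]
  -- key decomposition
  have key : ∀ n : ℕ, h^[n+1] [c] = h^[n] s ++ h^[n] [c] ++ h^[n] t := by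
    intro n
    rw [Function.iterate_succ_apply, hc, hiter, hiter]
  -- lengths are bounded
  obtain ⟨N, hN⟩ := (hfin.image List.length).bddAbove
  have hbd : ∀ n : ℕ, (h^[n] [c]).length ≤ N := by
    intro n
    exact hN ⟨h^[n] [c], ⟨n, rfl⟩, rfl⟩
  constructor
  · by_contra hcon
    push_neg at hcon
    have grow : ∀ n : ℕ, n + 1 ≤ (h^[n] [c]).length := by
      intro n
      induction n with
      | zero => simp
      | succ k ih =>
        have hk : 1 ≤ (h^[k] s).length :=
          List.length_pos_iff.mpr (hcon k)
        rw [key k]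
        simp only [List.length_append]
        omega
    have := grow N
    have := hbd N
    omega
  · by_contra hcon
    push_neg at hcon
    have grow : ∀ n : ℕ, n + 1 ≤ (h^[n] [c]).length := by
      intro n
      induction n with
      | zero => simp
      | succ k ih =>
        have hk : 1 ≤ (h^[k] t).length :=
          List.length_pos_iff.mpr (hcon k)
        rw [key k]
        simp only [List.length_append]
        omega
    have := grow N
    have := hbd N
    omega
end
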